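/- arXiv:1110.1144 — 2 statements merged into one kernel-verified Lean document; each statement's English description precedes it below -/
import Mathlib

section
/- For all sufficiently large n, every simple graph on n vertices that contains a cycle of length k for every 3 ≤ k ≤ n has at least n + log₂ n − 1 edges. -/
open Finset

variable {V : Type*} [DecidableEq V] {G : SimpleGraph V}

/-- membership parity helper -/
lemma even_pair {α} [DecidableEq α] {D : Finset α} {a b : α} (hab : a ≠ b)
    (h : Even (({a, b} ∩ D).card)) : a ∈ D ↔ b ∈ D := by
  by_cases ha : a ∈ D <;> by_cases hb : b ∈ D <;>
    simp_all [Finset.insert_inter_of_mem, Finset.insert_inter_of_notMem,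
      Finset.singleton_inter_of_mem, Finset.singleton_inter_of_notMem,
      Finset.card_insert_of_notMem, Nat.even_iff]

lemma mem_support_of_mem_edge {u v x : V} (p : G.Walk u v) {e : Sym2 V}
    (he : e ∈ p.edges) (hx : x ∈ e) : x ∈ p.support := by
  induction e with
  | h a b =>
    rcases Sym2.mem_iff.mp hx with rfl | rfl
    · exact p.fst_mem_support_of_mem_edges he
    · exact p.snd_mem_support_of_mem_edges he

lemma path_even_subset {u w : V} (p : G.Walk u w) (hp : p.IsPath)
    (D : Finset (Sym2 V)) (hD : D ⊆ p.edges.toFinset)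
    (hev : ∀ x, x ≠ u → x ≠ w → Even ((D.filter (fun e => x ∈ e)).card)) :
    D = ∅ ∨ D = p.edges.toFinset := by
  induction p generalizing D with
  | nil => left; simpa using hD
  | @cons u u' w h q ih =>
    rw [SimpleGraph.Walk.cons_isPath_iff] at hp
    obtain ⟨hq, hu⟩ := hp
    set e0 : Sym2 V := s(u, u') with he0
    set D' : Finset (Sym2 V) := D.erase e0 with hD'def
    have hD' : D' ⊆ q.edges.toFinset := by
      intro e he
      have h1 : e ∈ D := Finset.mem_of_mem_erase he
      have h2 : e ≠ e0 := Finset.ne_of_mem_erase he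
      have := hD h1
      simp only [SimpleGraph.Walk.edges_cons, List.toFinset_cons, Finset.mem_insert] at this
      tauto
    have hnoU : ∀ e ∈ q.edges, u ∉ e := by
      intro e he hx
      exact hu (mem_support_of_mem_edge q he hx)
    have hev' : ∀ x, x ≠ u' → x ≠ w → Even ((D'.filter (fun e => x ∈ e)).card) := by
      intro x hx1 hx2
      by_cases hxu : x = u
      · subst hxu
        have : D'.filter (fun e => x ∈ e) = ∅ := by
          apply Finset.filter_eq_empty_iff.mpr
          intro e he
          exact hnoU e (by simpa using hD' he)
        simp [this]
      · have : D'.filter (fun e => x ∈ e) = D.filter (fun e => x ∈ e) := by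
          apply Finset.ext
          intro e
          simp only [Finset.mem_filter, hD'def, Finset.mem_erase]
          constructor
          · tauto
          · rintro ⟨h1, h2⟩
            refine ⟨⟨fun hcon => ?_, h1⟩, h2⟩
            subst hcon
            rcases Sym2.mem_iff.mp h2 with rfl | rfl <;> simp_all
        rw [this]
        exact hev x hxu hx2
    have hDsub : ∀ hc : D' = ∅, D = ∅ ∨ D = {e0} := by
      intro hc
      rcases (Finset.erase_eq_empty_iff D e0).mp hc with h1 | h1
      · exact Or.inl h1
      · exact Or.inr h1
    rcases ih hq D' hD' hev' with hc | hc
    · -- D' = ∅, so D ⊆ {e0}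
      rcases hDsub hc with h1 | h1
      · exact Or.inl h1
      · -- D = {e0}
        cases q with
        | nil => right; simp [h1, he0]
        | @cons _ u'' _ h' r =>
          exfalso
          have hne : u' ≠ w := by
            rintro rfl
            have := SimpleGraph.Walk.isPath_iff_eq_nil.mp hq
            simp at this
          have := hev u' h.ne' hne
          rw [h1] at this
          have hfil : ({e0} : Finset (Sym2 V)).filter (fun e => u' ∈ e) = {e0} := by
            rw [Finset.filter_singleton]
            simp [he0]
          rw [hfil] at this
          simp at this
    · -- D' = q.edges.toFinset
      cases q with
      | nil =>
        simp only [SimpleGraph.Walk.edges_nil, List.toFinset_nil] at hc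
        rcases hDsub hc with h1 | h1
        · exact Or.inl h1
        · right; simp [h1, he0]
      | @cons _ u'' _ h' r =>
        right
        rw [SimpleGraph.Walk.cons_isPath_iff] at hq
        obtain ⟨hr, hu'⟩ := hq
        set e1 : Sym2 V := s(u', u'') with he1
        have hne : u' ≠ w := by
          rintro rfl
          exact hu' r.end_mem_support
        have huu'' : u ≠ u'' := by
          rintro rfl
          exact hu (by simp [SimpleGraph.Walk.support_cons])
        have he01 : e0 ≠ e1 := by
          intro hEq
          rcases Sym2.eq_iff.mp hEq with ⟨h1, h2⟩ | ⟨h1, h2⟩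
          · exact h.ne h1
          · exact huu'' h1
        have he1D : e1 ∈ D := by
          have : e1 ∈ D' := by
            rw [hc]; simp [SimpleGraph.Walk.edges_cons, he1]
          exact Finset.mem_of_mem_erase this
        have hfil : D.filter (fun e => u' ∈ e) = {e0, e1} ∩ D := by
          ext e
          simp only [Finset.mem_filter, Finset.mem_inter, Finset.mem_insert,
            Finset.mem_singleton]
          constructor
          · rintro ⟨heD, heu⟩
            refine ⟨?_, heD⟩
            have := hD heD
            simp only [SimpleGraph.Walk.edges_cons, List.toFinset_cons,
              Finset.mem_insert, List.mem_toFinset] at this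
            rcases this with h2 | h2 | h2
            · exact Or.inl h2
            · exact Or.inr h2
            · exact absurd (mem_support_of_mem_edge r h2 heu) hu'
          · rintro ⟨h2 | h2, heD⟩ <;> subst h2 <;>
              exact ⟨heD, by simp [he0, he1]⟩
        have hpar := hev u' h.ne' hne
        rw [hfil] at hpar
        have he0D : e0 ∈ D := (even_pair he01 hpar).mpr he1D
        have : D = insert e0 D' := (Finset.insert_erase he0D).symm
        rw [this, hc]
        simp [SimpleGraph.Walk.edges_cons, he0]

lemma cycle_even_subset {v : V} (c : G.Walk v v) (hc : c.IsCycle)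
    (D : Finset (Sym2 V)) (hD : D ⊆ c.edges.toFinset)
    (hev : ∀ x, Even ((D.filter (fun e => x ∈ e)).card)) :
    D = ∅ ∨ D = c.edges.toFinset := by
  cases c with
  | nil => exact absurd rfl hc.ne_nil
  | @cons _ u' _ h q =>
    rw [SimpleGraph.Walk.cons_isCycle_iff] at hc
    obtain ⟨hq, hns⟩ := hc
    set e0 : Sym2 V := s(v, u') with he0
    set D' : Finset (Sym2 V) := D.erase e0 with hD'def
    have hD' : D' ⊆ q.edges.toFinset := by
      intro e he
      have h1 : e ∈ D := Finset.mem_of_mem_erase he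
      have h2 : e ≠ e0 := Finset.ne_of_mem_erase he
      have := hD h1
      simp only [SimpleGraph.Walk.edges_cons, List.toFinset_cons, Finset.mem_insert] at this
      tauto
    have hev' : ∀ x, x ≠ u' → x ≠ v → Even ((D'.filter (fun e => x ∈ e)).card) := by
      intro x hx1 hx2
      have : D'.filter (fun e => x ∈ e) = D.filter (fun e => x ∈ e) := by
        apply Finset.ext
        intro e
        simp only [Finset.mem_filter, hD'def, Finset.mem_erase]
        constructor
        · tauto
        · rintro ⟨h1, h2⟩
          refine ⟨⟨fun hcon => ?_, h1⟩, h2⟩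
          subst hcon
          rcases Sym2.mem_iff.mp h2 with rfl | rfl <;> simp_all
      rw [this]
      exact hev x
    cases q with
    | nil => exact absurd rfl h.ne
    | @cons _ u'' _ h' r =>
      rw [SimpleGraph.Walk.cons_isPath_iff] at hq
      obtain ⟨hr, hu'⟩ := hq
      set e1 : Sym2 V := s(u', u'') with he1
      have he1q : e1 ∈ (SimpleGraph.Walk.cons h' r).edges := by
        simp [SimpleGraph.Walk.edges_cons, he1]
      have he01 : e0 ≠ e1 := fun hEq => hns (hEq ▸ he1q)
      have hfil : D.filter (fun e => u' ∈ e) = {e0, e1} ∩ D := by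
        ext e
        simp only [Finset.mem_filter, Finset.mem_inter, Finset.mem_insert,
          Finset.mem_singleton]
        constructor
        · rintro ⟨heD, heu⟩
          refine ⟨?_, heD⟩
          have := hD heD
          simp only [SimpleGraph.Walk.edges_cons, List.toFinset_cons,
            Finset.mem_insert, List.mem_toFinset] at this
          rcases this with h2 | h2 | h2
          · exact Or.inl h2
          · exact Or.inr h2
          · exact absurd (mem_support_of_mem_edge r h2 heu) hu'
        · rintro ⟨h2 | h2, heD⟩ <;> subst h2 <;>
            exact ⟨heD, by simp [he0, he1]⟩
      have hpar := hev u'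
      rw [hfil] at hpar
      have hkey : e0 ∈ D ↔ e1 ∈ D := even_pair he01 hpar
      rcases path_even_subset _ ((SimpleGraph.Walk.cons_isPath_iff _ _).mpr ⟨hr, hu'⟩) D' hD' hev'
        with hcase | hcase
      · left
        rcases (Finset.erase_eq_empty_iff D e0).mp hcase with h1 | h1
        · exact h1
        · exfalso
          have : e1 ∈ D := hkey.mp (by simp [h1])
          rw [h1] at this
          simp only [Finset.mem_singleton] at this
          exact he01 this.symm
      · right
        have he1D : e1 ∈ D := Finset.mem_of_mem_erase
          (show e1 ∈ D.erase e0 by rw [← hD'def, hcase]; simp [he1q, he1])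
        have he0D : e0 ∈ D := hkey.mpr he1D
        have : D = insert e0 D' := (Finset.insert_erase he0D).symm
        rw [this, hcase]
        simp [SimpleGraph.Walk.edges_cons, he0]

open scoped symmDiff

lemma card_symmDiff {α} [DecidableEq α] (X Y : Finset α) :
    (X ∆ Y).card + 2 * (X ∩ Y).card = X.card + Y.card := by
  have h1 : X ∆ Y = (X ∪ Y) \ (X ∩ Y) := by
    ext a; simp [Finset.mem_symmDiff]; tauto
  have h2 : (X ∩ Y) ⊆ (X ∪ Y) := (Finset.inter_subset_left).trans Finset.subset_union_left
  have h3 := Finset.card_sdiff_of_subset h2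
  have h4 := Finset.card_union_add_card_inter X Y
  have h5 : (X ∩ Y).card ≤ (X ∪ Y).card := Finset.card_le_card h2
  rw [h1]
  omega

lemma filter_symmDiff' {α} [DecidableEq α] (X Y : Finset α) (P : α → Prop) [DecidablePred P] :
    (X ∆ Y).filter P = (X.filter P) ∆ (Y.filter P) := by
  ext a; simp [Finset.mem_symmDiff, Finset.mem_filter]; tauto

lemma even_filter_symmDiff {α} [DecidableEq α] {X Y : Finset α} {P : α → Prop} [DecidablePred P]
    (hA : Even (X.filter P).card) (hB : Even (Y.filter P).card) :
    Even (((X ∆ Y).filter P).card) := by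
  rw [filter_symmDiff']
  obtain ⟨a, ha⟩ := hA
  obtain ⟨b, hb⟩ := hB
  have := card_symmDiff (X.filter P) (Y.filter P)
  rw [Nat.even_iff]
  omega

lemma cycle_even_degree {v x : V} (c : G.Walk v v) (hc : c.IsCycle) :
    Even ((c.edges.toFinset.filter (fun e => x ∈ e)).card) := by
  have ht := hc.isTrail
  have h := (ht.even_countP_edges_iff x).mpr (fun h => absurd rfl h)
  have hnd : c.edges.Nodup := ht.edges_nodup
  have h2 : (c.edges.toFinset.filter (fun e => x ∈ e)).card
      = c.edges.countP (fun e => x ∈ e) := by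
    have he : c.edges.toFinset.filter (fun e => x ∈ e)
        = (c.edges.filter (fun e => decide (x ∈ e))).toFinset := by
      ext e; simp [List.mem_filter]
    rw [he, List.toFinset_card_of_nodup (hnd.filter _), List.countP_eq_length_filter]
  rwa [h2]

lemma sum_powerset_card' {α} [DecidableEq α] (s : Finset α) :
    ∑ T ∈ s.powerset, T.card = s.card * 2 ^ (s.card - 1) := by
  induction s using Finset.induction_on with
  | empty => simp
  | @insert a s ha ih =>
    rw [Finset.sum_powerset_insert ha, ih]
    have h2 : ∑ T ∈ s.powerset, (insert a T).card = ∑ T ∈ s.powerset, (T.card + 1) := by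
      apply Finset.sum_congr rfl
      intro T hT
      rw [Finset.card_insert_of_notMem (fun hmem => ha (Finset.mem_powerset.mp hT hmem))]
    rw [h2, Finset.sum_add_distrib, ih, Finset.sum_const, Finset.card_powerset, smul_eq_mul,
      mul_one, Finset.card_insert_of_notMem ha]
    rcases Nat.eq_zero_or_pos s.card with h0 | h0
    · simp [h0]
    · have : s.card - 1 + 1 = s.card := Nat.succ_pred_eq_of_pos h0
      calc s.card * 2 ^ (s.card - 1) + (s.card * 2 ^ (s.card - 1) + 2 ^ s.card)
          = s.card * (2 ^ (s.card - 1) * 2) + 2 ^ s.card := by ring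
        _ = s.card * 2 ^ s.card + 2 ^ s.card := by
            rw [← pow_succ, this]
        _ = (s.card + 1) * 2 ^ (s.card + 1 - 1) := by
            simp only [Nat.add_sub_cancel]
            ring

lemma pairing_lemma {V : Type*} [DecidableEq V] {G : SimpleGraph V} {v : V}
    (c : G.Walk v v) (hc : c.IsCycle)
    {A B : Finset (Sym2 V)}
    (hAev : ∀ x, Even ((A.filter (fun e => x ∈ e)).card))
    (hBev : ∀ x, Even ((B.filter (fun e => x ∈ e)).card))
    (hS : A \ c.edges.toFinset = B \ c.edges.toFinset)
    (hne : A ≠ B) :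
    A ∆ B = c.edges.toFinset ∧ A ∩ B = A \ c.edges.toFinset := by
  set EC := c.edges.toFinset with hEC
  have hsub : A ∆ B ⊆ EC := by
    intro e he
    by_contra hnc
    rcases Finset.mem_symmDiff.mp he with ⟨h1, h2⟩ | ⟨h1, h2⟩
    · have : e ∈ A \ EC := Finset.mem_sdiff.mpr ⟨h1, hnc⟩
      rw [hS] at this
      exact h2 (Finset.mem_sdiff.mp this).1
    · have : e ∈ B \ EC := Finset.mem_sdiff.mpr ⟨h1, hnc⟩
      rw [← hS] at this
      exact h2 (Finset.mem_sdiff.mp this).1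
  have hev : ∀ x, Even (((A ∆ B).filter (fun e => x ∈ e)).card) :=
    fun x => even_filter_symmDiff (hAev x) (hBev x)
  rcases cycle_even_subset c hc (A ∆ B) hsub hev with hD | hD
  · exact absurd (symmDiff_eq_bot.mp hD) hne
  · refine ⟨hD, ?_⟩
    ext e
    simp only [Finset.mem_inter, Finset.mem_sdiff]
    constructor
    · rintro ⟨h1, h2⟩
      refine ⟨h1, fun hec => ?_⟩
      rw [hEC, ← hD] at hec
      rcases Finset.mem_symmDiff.mp hec with ⟨_, h4⟩ | ⟨_, h4⟩
      · exact h4 h2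
      · exact h4 h1
    · rintro ⟨h1, h2⟩
      refine ⟨h1, ?_⟩
      have : e ∈ B \ EC := by rw [← hS]; exact Finset.mem_sdiff.mpr ⟨h1, h2⟩
      exact (Finset.mem_sdiff.mp this).1

/-- For all sufficiently large n, every simple graph on n vertices
that contains a cycle of length k for every 3 ≤ k ≤ n has at least
n + log₂ n − 1 edges. -/
theorem stmt_3 :
    ∃ N : ℕ, ∀ n : ℕ, N ≤ n → ∀ G : SimpleGraph (Fin n),
      (∀ k : ℕ, 3 ≤ k → k ≤ n →
        ∃ (v : Fin n) (c : G.Walk v v), c.IsCycle ∧ c.length = k) →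
      (n : ℝ) + Real.logb 2 n - 1 ≤ (G.edgeSet.ncard : ℝ) := by
  classical
  use 16
  intro n hn G H
  have hn3 : 3 ≤ n := by omega
  obtain ⟨v0, c0, hc0, hl0⟩ := H n hn3 le_rfl
  set EC : Finset (Sym2 (Fin n)) := c0.edges.toFinset with hECdef
  have hECcard : EC.card = n := by
    rw [hECdef, List.toFinset_card_of_nodup hc0.isTrail.edges_nodup,
      SimpleGraph.Walk.length_edges, hl0]
  have hEfin : G.edgeSet.Finite := Set.toFinite _
  set E : Finset (Sym2 (Fin n)) := hEfin.toFinset with hEdef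
  have hncard : G.edgeSet.ncard = E.card := by
    rw [hEdef, Set.ncard_eq_toFinset_card]
  have hECsub : EC ⊆ E := by
    intro e he
    rw [hEdef, Set.Finite.mem_toFinset]
    exact c0.edges_subset_edgeSet (List.mem_toFinset.mp he)
  set t := (E \ EC).card with htdef
  have hmcard : E.card = n + t := by
    have := Finset.card_sdiff_add_card_eq_card hECsub
    omega
  have key : ∀ k, 3 ≤ k → k ≤ n → ∃ A : Finset (Sym2 (Fin n)),
      A.card = k ∧ A ⊆ E ∧ (∀ x, Even ((A.filter (fun e => x ∈ e)).card)) := by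
    intro k h3 hk
    obtain ⟨v, c, hc, hl⟩ := H k h3 hk
    refine ⟨c.edges.toFinset, ?_, ?_, fun x => cycle_even_degree c hc⟩
    · rw [List.toFinset_card_of_nodup hc.isTrail.edges_nodup,
        SimpleGraph.Walk.length_edges, hl]
    · intro e he
      rw [hEdef, Set.Finite.mem_toFinset]
      exact c.edges_subset_edgeSet (List.mem_toFinset.mp he)
  choose! Ek hEkcard hEksub hEkeven using key
  set S : ℕ → Finset (Sym2 (Fin n)) := fun k => Ek k \ EC with hSdef
  set I := Finset.Icc 3 (n - 1) with hIdef
  have hImem : ∀ k ∈ I, 3 ≤ k ∧ k ≤ n - 1 := fun k hk => Finset.mem_Icc.mp hk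
  have hSne : ∀ k ∈ I, S k ≠ ∅ := by
    intro k hk h0
    obtain ⟨h3, hk1⟩ := hImem k hk
    have hkn : k ≤ n := by omega
    have hsub : Ek k ⊆ EC := by
      intro e he
      by_contra hne
      exact (Finset.eq_empty_iff_forall_notMem.mp h0 e) (Finset.mem_sdiff.mpr ⟨he, hne⟩)
    rcases cycle_even_subset c0 hc0 (Ek k) hsub (hEkeven k h3 hkn) with h | h
    · have := hEkcard k h3 hkn
      rw [h] at this
      simp at this
      omega
    · have h1 := hEkcard k h3 hkn
      have h2 : (Ek k).card = n := by rw [h, ← hECdef, hECcard]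
      omega
  have pair : ∀ k ∈ I, ∀ j ∈ I, k ≠ j → S k = S j → k + j = n + 2 * (S k).card := by
    intro k hk j hj hne hSS
    obtain ⟨hk3, hk1⟩ := hImem k hk
    obtain ⟨hj3, hj1⟩ := hImem j hj
    have hkn : k ≤ n := by omega
    have hjn : j ≤ n := by omega
    have hEne : Ek k ≠ Ek j := by
      intro h
      apply hne
      rw [← hEkcard k hk3 hkn, ← hEkcard j hj3 hjn, h]
    obtain ⟨hD, hI2⟩ := pairing_lemma c0 hc0 (hEkeven k hk3 hkn) (hEkeven j hj3 hjn) hSS hEne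
    have hcs := card_symmDiff (Ek k) (Ek j)
    rw [hD, hI2, hEkcard k hk3 hkn, hEkcard j hj3 hjn] at hcs
    have : (c0.edges.toFinset).card = n := by rw [← hECdef, hECcard]
    rw [this] at hcs
    have hScard : (S k).card = (Ek k \ c0.edges.toFinset).card := by rw [hSdef]
    omega
  have pairE : ∀ k ∈ I, ∀ j ∈ I, k ≠ j → S k = S j → Ek k ∆ Ek j = EC := by
    intro k hk j hj hne hSS
    obtain ⟨hk3, hk1⟩ := hImem k hk
    obtain ⟨hj3, hj1⟩ := hImem j hj
    have hkn : k ≤ n := by omega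
    have hjn : j ≤ n := by omega
    have hEne : Ek k ≠ Ek j := by
      intro h
      apply hne
      rw [← hEkcard k hk3 hkn, ← hEkcard j hj3 hjn, h]
    exact (pairing_lemma c0 hc0 (hEkeven k hk3 hkn) (hEkeven j hj3 hjn) hSS hEne).1
  set P := (E \ EC).powerset.erase ∅ with hPdef
  have hmaps : ∀ k ∈ I, S k ∈ P := by
    intro k hk
    obtain ⟨h3, hk1⟩ := hImem k hk
    rw [hPdef, Finset.mem_erase, Finset.mem_powerset]
    refine ⟨hSne k hk, ?_⟩
    intro e he
    obtain ⟨h1, h2⟩ := Finset.mem_sdiff.mp he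
    exact Finset.mem_sdiff.mpr ⟨hEksub k h3 (by omega) h1, h2⟩
  have hPcard : P.card = 2 ^ t - 1 := by
    rw [hPdef, Finset.card_erase_of_mem (Finset.empty_mem_powerset _),
      Finset.card_powerset, htdef]
  have hIcard : I.card = n - 3 := by
    rw [hIdef, Nat.card_Icc]
    omega
  have hfib := Finset.card_eq_sum_card_fiberwise hmaps
  have hfib2 : ∀ T ∈ P, (I.filter (fun k => S k = T)).card ≤ 2 := by
    intro T hT
    by_contra hgt
    push_neg at hgt
    obtain ⟨a, b, c', ha, hb, hc', hab, hac, hbc⟩ := Finset.two_lt_card_iff.mp hgt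
    obtain ⟨haI, hSa⟩ := Finset.mem_filter.mp ha
    obtain ⟨hbI, hSb⟩ := Finset.mem_filter.mp hb
    obtain ⟨hcI, hSc⟩ := Finset.mem_filter.mp hc'
    have h1 : Ek a ∆ Ek b = EC := pairE a haI b hbI hab (by rw [hSa, hSb])
    have h2 : Ek a ∆ Ek c' = EC := pairE a haI c' hcI hac (by rw [hSa, hSc])
    have h3 : Ek b = Ek c' := symmDiff_right_injective (Ek a) (h1.trans h2.symm)
    obtain ⟨ha3, ha1⟩ := hImem a haI
    obtain ⟨hb3, hb1⟩ := hImem b hbI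
    obtain ⟨hc3, hc1⟩ := hImem c' hcI
    apply hbc
    rw [← hEkcard b hb3 (by omega), ← hEkcard c' hc3 (by omega), h3]
  have hone : (1 : ℕ) ≤ 2 ^ t := Nat.one_le_two_pow
  have hcount : n - 3 ≤ 2 * (2 ^ t - 1) := by
    have h1 : I.card ≤ ∑ _T ∈ P, 2 := by
      rw [hfib]
      exact Finset.sum_le_sum hfib2
    rw [hIcard, Finset.sum_const, smul_eq_mul, hPcard] at h1
    omega
  by_cases hsplit : n ≤ 2 ^ (t + 1)
  · -- final real computation
    rw [hncard, hmcard]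
    have hlog : Real.logb 2 n ≤ ((t : ℝ) + 1) := by
      rw [Real.logb_le_iff_le_rpow (by norm_num) (by positivity)]
      have h1 : ((2 : ℝ)) ^ ((t : ℝ) + 1) = ((2 ^ (t + 1) : ℕ) : ℝ) := by
        push_cast
        rw [← Real.rpow_natCast 2 (t + 1)]
        push_cast
        ring_nf
      rw [h1]
      exact_mod_cast hsplit
    push_cast
    linarith
  · exfalso
    push_neg at hsplit
    have hps : 2 ^ (t + 1) = 2 * 2 ^ t := by ring
    have hq : n = 2 ^ (t + 1) + 1 := by omega
    have ht3 : 3 ≤ t := by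
      by_contra hcon
      push_neg at hcon
      have : 2 ^ (t + 1) ≤ 2 ^ 3 := Nat.pow_le_pow_right (by norm_num) (by omega)
      omega
    have hfibeq : ∀ T ∈ P, (I.filter (fun k => S k = T)).card = 2 := by
      by_contra hcon
      push_neg at hcon
      obtain ⟨T0, hT0, hT0ne⟩ := hcon
      have hlt : (I.filter (fun k => S k = T0)).card < 2 :=
        lt_of_le_of_ne (hfib2 T0 hT0) hT0ne
      have hslt : ∑ T ∈ P, (I.filter (fun k => S k = T)).card < ∑ _T ∈ P, 2 :=
        Finset.sum_lt_sum hfib2 ⟨T0, hT0, hlt⟩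
      rw [← hfib, Finset.sum_const, smul_eq_mul, hIcard, hPcard] at hslt
      omega
    have hsum : ∑ k ∈ I, k = ∑ T ∈ P, (n + 2 * T.card) := by
      rw [← Finset.sum_fiberwise_of_maps_to hmaps (fun k => k)]
      apply Finset.sum_congr rfl
      intro T hT
      obtain ⟨a, b, hab, hset⟩ := Finset.card_eq_two.mp (hfibeq T hT)
      have haf : a ∈ I.filter (fun k => S k = T) := by rw [hset]; simp
      have hbf : b ∈ I.filter (fun k => S k = T) := by rw [hset]; simp
      obtain ⟨haI, hSa⟩ := Finset.mem_filter.mp haf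
      obtain ⟨hbI, hSb⟩ := Finset.mem_filter.mp hbf
      have hpp := pair a haI b hbI hab (by rw [hSa, hSb])
      rw [hSa] at hpp
      rw [hset, Finset.sum_insert (by simp [hab]), Finset.sum_singleton]
      exact hpp
    have hsumP : ∑ T ∈ P, T.card = t * 2 ^ (t - 1) := by
      have h1 : (∅ : Finset (Sym2 (Fin n))).card
          + ∑ T ∈ (E \ EC).powerset.erase ∅, T.card
          = ∑ T ∈ (E \ EC).powerset, T.card :=
        Finset.add_sum_erase _ _ (Finset.empty_mem_powerset _)
      rw [Finset.card_empty, zero_add] at h1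
      rw [hPdef, h1, sum_powerset_card', htdef]
    have hRHS : ∑ T ∈ P, (n + 2 * T.card) = (2 ^ t - 1) * n + 2 * (t * 2 ^ (t - 1)) := by
      rw [Finset.sum_add_distrib, Finset.sum_const, smul_eq_mul, hPcard, ← Finset.mul_sum,
        hsumP]
    have hLHS : (∑ k ∈ I, k) * 2 = n * (n - 1) - 6 := by
      have h0 : I = Finset.Ico 3 n := by
        rw [hIdef, ← Finset.Ico_add_one_right_eq_Icc]
        congr 1
        omega
      have h1 : (∑ i ∈ Finset.range 3, i) + ∑ i ∈ Finset.Ico 3 n, i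
          = ∑ i ∈ Finset.range n, i := Finset.sum_range_add_sum_Ico _ (by omega)
      have h2 := Finset.sum_range_id_mul_two n
      have h3 : (∑ i ∈ Finset.range 3, i) = 3 := by decide
      rw [h0]
      omega
    -- now derive contradiction
    have hpow1 : 2 ^ t = 2 ^ (t - 1) * 2 := by
      rw [← pow_succ]
      congr 1
      omega
    obtain ⟨q, hqdef⟩ : ∃ q, 2 ^ (t - 1) = q := ⟨_, rfl⟩
    have hq4 : 4 ≤ q := by
      rw [← hqdef]
      calc (4 : ℕ) = 2 ^ 2 := by norm_num
        _ ≤ 2 ^ (t - 1) := Nat.pow_le_pow_right (by norm_num) (by omega)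
    have heq : n * (n - 1) - 6 = ((2 ^ t - 1) * n + 2 * (t * 2 ^ (t - 1))) * 2 := by
      rw [← hLHS, hsum, hRHS]
    have h6 : 6 ≤ n * (n - 1) := by
      calc (6 : ℕ) ≤ 16 * 15 := by norm_num
        _ ≤ n * (n - 1) := Nat.mul_le_mul (by omega) (by omega)
    have h1n : 1 ≤ n := by omega
    zify [h6, hone, h1n] at heq
    have hZ1 : ((2 : ℤ) ^ t : ℤ) = 2 * (q : ℤ) := by
      have : (2 : ℕ) ^ t = 2 * q := by omega
      exact_mod_cast this
    have hZ2 : ((2 : ℤ) ^ (t - 1) : ℤ) = (q : ℤ) := by exact_mod_cast hqdef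
    have hZ3 : ((n : ℤ)) = 4 * (q : ℤ) + 1 := by
      have : n = 4 * q + 1 := by omega
      exact_mod_cast this
    rw [hZ1, hZ2, hZ3] at heq
    have hM : 3 * (q : ℤ) ≤ (t : ℤ) * (q : ℤ) := by
      have h3 : (3 : ℤ) ≤ (t : ℤ) := by exact_mod_cast ht3
      have hq0 : (0 : ℤ) ≤ (q : ℤ) := by positivity
      exact mul_le_mul_of_nonneg_right h3 hq0
    have hq4' : (4 : ℤ) ≤ (q : ℤ) := by exact_mod_cast hq4
    nlinarith [heq, hM, hq4']
end

section
/- For all sufficiently large n, there exists a simple graph with n vertices and at most n + (3/2)·log₂ n + 1 edges that contains a cycle of length k for every 3 ≤ k ≤ n. -/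
/-!
Start from the Hamiltonian cycle `0, 1, …, n - 1` and mark the hubs `c i = hub n i`, equal to
`2 ^ i + i - 1` for `i < M` and to `n - 1` for `i = M`, where `M = numChords n` is least with
`n ≤ 2 ^ M + M`. The chords `c i — c (i + 1)` let a path from `0` to `n - 1` skip any set of arcs
between consecutive hubs. Skipping the `i`-th arc saves at most one more than the total `c i - i`
that the earlier arcs can save, so the lengths of these paths fill the whole interval
`[M, n - 1]`, and the edge `n - 1 — 0` closes them into cycles of every length in `(M, n]`.
Spokes from `0` to `c j`, for `j ≤ 3` and for `j ≡ M (mod 3)`, close the hub paths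
`c i, …, c j` into cycles of every length in `[3, M]`. Altogether this uses
`n + M + M / 3 + 3 ≤ n + (4 / 3) log₂ n + O(1)` edges.
-/

open SimpleGraph Finset

theorem SimpleGraph.exists_isCycle_of_isChain {V : Type*} {G : SimpleGraph V} {u : V} {l : List V}
    (hchain : (u :: l).IsChain G.Adj) (hlast : l.getLast? = some u) (hnodup : l.Nodup)
    (hlen : 3 ≤ l.length) :
    ∃ (v : V) (p : G.Walk v v), p.IsCycle ∧ p.length = l.length := by
  have hne : l ≠ [] := by rintro rfl; simp at hlen
  have hend : (u :: l).getLast (List.cons_ne_nil _ _) = u := by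
    rw [List.getLast_cons hne, List.getLast_eq_iff_getLast?_eq_some, hlast]
  set p₀ := Walk.ofSupport (u :: l) (List.cons_ne_nil _ _) hchain
  obtain ⟨p, hsupp, hplen⟩ : ∃ p : G.Walk u u, p.support = u :: l ∧ p.length = l.length :=
    ⟨p₀.copy List.head_cons hend, (Walk.support_copy ..).trans (Walk.support_ofSupport ..),
      (Walk.length_copy ..).trans (Walk.length_ofSupport ..)⟩
  have hnil : ¬ p.Nil := by rw [← Walk.length_eq_zero_iff]; omega
  refine ⟨u, p, Walk.isCycle_iff_isPath_tail_and_le_length.mpr ⟨?_, by omega⟩, hplen⟩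
  rw [Walk.isPath_def, Walk.support_tail_of_not_nil _ hnil, hsupp]
  exact hnodup

theorem SimpleGraph.ncard_edgeSet_cycleGraph_le (n : ℕ) : (cycleGraph n).edgeSet.ncard ≤ n := by
  match n with
  | 0 | 1 => simp [cycleGraph_zero_eq_bot, cycleGraph_one_eq_bot]
  | n + 2 =>
    rw [← coe_edgeFinset, Set.ncard_coe_finset]
    have hsum := (cycleGraph (n + 2)).sum_degrees_eq_twice_card_edges
    have hdeg : ∑ v, (cycleGraph (n + 2)).degree v ≤ ∑ _v : Fin (n + 2), 2 :=
      sum_le_sum fun _ _ => cycleGraph_degree_two_le.trans_le card_le_two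
    rw [sum_const, card_univ, Fintype.card_fin, smul_eq_mul] at hdeg
    omega

namespace SparsePancyclic

section ChordPath

def ChordStep (c : ℕ → ℕ) (m x y : ℕ) : Prop := y = x + 1 ∨ ∃ t < m, x = c t ∧ y = c (t + 1)

def IsChordPath (c : ℕ → ℕ) (m : ℕ) (P : List ℕ) (e : ℕ) : Prop :=
  (0 :: P).IsChain (ChordStep c m) ∧ (0 :: P).getLast? = some e ∧ ∀ x ∈ P, x ≤ e

variable {c : ℕ → ℕ} {m : ℕ}

theorem ChordStep.lt (hc : ∀ t < m, c t < c (t + 1)) {x y : ℕ} (h : ChordStep c m x y) : x < y := by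
  obtain rfl | ⟨t, ht, rfl, rfl⟩ := h
  · exact Nat.lt_succ_self x
  · exact hc t ht

theorem IsChordPath.append_range' {P : List ℕ} {e d : ℕ} (hP : IsChordPath c m P e) (hd : 0 < d) :
    IsChordPath c m (P ++ List.range' (e + 1) d) (e + d) := by
  obtain ⟨hchain, hlast, hle⟩ := hP
  refine ⟨?_, ?_, fun x hx => ?_⟩
  · rw [← List.cons_append]
    refine hchain.append ((List.isChain_range' _ _ 1).imp fun _ _ => Or.inl) fun x hx y hy => ?_
    rw [hlast, Option.mem_some_iff] at hx
    rw [List.head?_range', if_neg hd.ne', Option.mem_some_iff] at hy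
    exact Or.inl (by omega)
  · rw [← List.cons_append, List.getLast?_append, List.getLast?_range', if_neg hd.ne',
      Option.some_or]
    congr 1
    omega
  · rcases List.mem_append.mp hx with hx | hx
    · exact (hle x hx).trans (Nat.le_add_right e d)
    · rw [List.mem_range'_1] at hx
      omega

theorem IsChordPath.append_chord {P : List ℕ} {t : ℕ} (hP : IsChordPath c m P (c t)) (ht : t < m)
    (hlt : c t < c (t + 1)) : IsChordPath c m (P ++ [c (t + 1)]) (c (t + 1)) := by
  obtain ⟨hchain, hlast, hle⟩ := hP
  refine ⟨?_, by rw [← List.cons_append, List.getLast?_concat], fun x hx => ?_⟩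
  · rw [← List.cons_append]
    refine hchain.append (.singleton _) fun x hx y hy => ?_
    rw [hlast, Option.mem_some_iff] at hx
    rw [List.head?_singleton, Option.mem_some_iff] at hy
    exact Or.inr ⟨t, ht, hx.symm, hy.symm⟩
  · rcases List.mem_append.mp hx with hx | hx
    · exact (hle x hx).trans hlt.le
    · exact (List.mem_singleton.mp hx).le

theorem exists_isChordPath (hc0 : c 0 = 0) (hc : ∀ t < m, c t < c (t + 1))
    (hgap : ∀ t < m, c (t + 1) + t ≤ 2 * c t + 2) {i s : ℕ} (hi : i ≤ m) (hs : s + i ≤ c i) :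
    ∃ P, IsChordPath c m P (c i) ∧ P.length + s = c i := by
  induction i generalizing s with
  | zero => exact ⟨[], ⟨.singleton 0, by simp [hc0], by simp⟩, by simp_all⟩
  | succ i ih =>
    have hlt := hc i hi
    have hgap := hgap i hi
    by_cases hs' : s + i ≤ c i
    · obtain ⟨P, hP, hlen⟩ := ih (by omega) hs'
      refine ⟨P ++ List.range' (c i + 1) (c (i + 1) - c i), ?_, ?_⟩
      · have := hP.append_range' (Nat.sub_pos_of_lt hlt)
        rwa [Nat.add_sub_cancel' hlt.le] at this
      · simp only [List.length_append, List.length_range']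
        omega
    · obtain ⟨P, hP, hlen⟩ := ih (s := s - (c (i + 1) - c i - 1)) (by omega) (by omega)
      refine ⟨_, hP.append_chord hi hlt, ?_⟩
      simp only [List.length_append, List.length_singleton]
      omega

end ChordPath

section Construction

variable (n : ℕ)

def numChords : ℕ := Nat.find (⟨n, Nat.le_add_left n (2 ^ n)⟩ : ∃ m, n ≤ 2 ^ m + m)

def hub (i : ℕ) : ℕ := min (2 ^ i + i - 1) (n - 1)

def spokeIndices : Finset ℕ :=
  {1, 2, 3} ∪ (range (numChords n / 3)).image (numChords n - 3 * ·)

def chords [NeZero n] : Finset (Sym2 (Fin n)) :=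
  (range (numChords n)).image (fun t => s(Fin.ofNat n (hub n t), Fin.ofNat n (hub n (t + 1)))) ∪
    (spokeIndices n).image (fun j => s(0, Fin.ofNat n (hub n j)))

def graph [NeZero n] : SimpleGraph (Fin n) := cycleGraph n ⊔ fromEdgeSet (chords n)

variable {n}

theorem le_pow_numChords_add : n ≤ 2 ^ numChords n + numChords n :=
  Nat.find_spec (⟨n, Nat.le_add_left n (2 ^ n)⟩ : ∃ m, n ≤ 2 ^ m + m)

theorem pow_add_lt_of_lt_numChords {i : ℕ} (hi : i < numChords n) : 2 ^ i + i < n := by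
  unfold numChords at hi
  have := Nat.find_min _ hi
  omega

theorem numChords_sub_one_le_log : numChords n - 1 ≤ Nat.log 2 n := by
  rcases Nat.eq_zero_or_pos (numChords n) with h | h
  · simp [h]
  · have := pow_add_lt_of_lt_numChords (n := n) (i := numChords n - 1) (by omega)
    exact Nat.le_log_of_pow_le one_lt_two (by omega)

theorem hub_zero : hub n 0 = 0 := by simp [hub]

theorem hub_le (i : ℕ) : hub n i ≤ n - 1 := min_le_right _ _

theorem hub_numChords : hub n (numChords n) = n - 1 :=
  min_eq_right (by have := @le_pow_numChords_add n; omega)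

theorem hub_of_lt_numChords {i : ℕ} (hi : i < numChords n) : hub n i = 2 ^ i + i - 1 :=
  min_eq_left (by have := pow_add_lt_of_lt_numChords hi; omega)

theorem hub_lt_hub_succ {i : ℕ} (hi : i < numChords n) : hub n i < hub n (i + 1) := by
  have := pow_add_lt_of_lt_numChords hi
  have := Nat.one_le_two_pow (n := i)
  rw [hub_of_lt_numChords hi, hub, Nat.pow_succ]
  exact lt_min (by omega) (by omega)

theorem hub_succ_add_le {i : ℕ} (hi : i < numChords n) : hub n (i + 1) + i ≤ 2 * hub n i + 2 := by
  have : hub n (i + 1) ≤ 2 ^ i * 2 + (i + 1) - 1 := Nat.pow_succ _ _ ▸ min_le_left _ _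
  have := Nat.one_le_two_pow (n := i)
  rw [hub_of_lt_numChords hi]
  omega

theorem hub_pos (hn : 2 ≤ n) {j : ℕ} (hj : 1 ≤ j) : 0 < hub n j := by
  have := Nat.one_le_two_pow (n := j)
  exact lt_min (by omega) (by omega)

theorem strictMonoOn_hub : StrictMonoOn (hub n) (Set.Iic (numChords n)) :=
  strictMonoOn_Iic_of_lt_succ fun _ hi => hub_lt_hub_succ hi

theorem mem_spokeIndices {j : ℕ} (hj : 1 ≤ j)
    (h : j ≤ 3 ∨ j ≤ numChords n ∧ j % 3 = numChords n % 3) : j ∈ spokeIndices n := by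
  by_cases hj3 : j ≤ 3
  · exact mem_union_left _ (by simp only [mem_insert, mem_singleton]; omega)
  · refine mem_union_right _ (mem_image.mpr ⟨(numChords n - j) / 3, ?_, ?_⟩)
    · rw [mem_range]; omega
    · omega

theorem one_le_of_mem_spokeIndices {j : ℕ} (hj : j ∈ spokeIndices n) : 1 ≤ j := by
  simp only [spokeIndices, mem_union, mem_insert, mem_singleton, mem_image, mem_range] at hj
  omega

theorem card_spokeIndices_le : #(spokeIndices n) ≤ 3 + numChords n / 3 :=
  (card_union_le _ _).trans (add_le_add card_le_three (card_image_le.trans (card_range _).le))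


variable [NeZero n]

theorem ofNat_injOn : Set.InjOn (Fin.ofNat n) (Set.Iio n) := fun a ha b hb hab => by
  rw [Fin.ext_iff, Fin.val_ofNat, Fin.val_ofNat, Nat.mod_eq_of_lt ha, Nat.mod_eq_of_lt hb] at hab
  exact hab

theorem hub_lt (i : ℕ) : hub n i < n := by
  have := hub_le (n := n) i
  have := NeZero.pos n
  omega

theorem ofNat_hub_injOn : Set.InjOn (fun t => Fin.ofNat n (hub n t)) (Set.Iic (numChords n)) :=
  fun a ha b hb hab => strictMonoOn_hub.injOn ha hb (ofNat_injOn (hub_lt a) (hub_lt b) hab)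

theorem graph_adj_succ (hn : 2 ≤ n) (x : ℕ) :
    (graph n).Adj (Fin.ofNat n x) (Fin.ofNat n (x + 1)) := by
  refine Or.inl ?_
  have : Fin.ofNat n (x + 1) = Fin.ofNat n x + 1 := by ext; simp [Fin.val_add, Nat.add_mod]
  rw [this, cycleGraph_adj', add_sub_cancel_left, Fin.val_one', Nat.mod_eq_of_lt hn]
  exact Or.inr rfl

theorem graph_adj_of_mem_chords {a b : Fin n} (hab : a ≠ b) (h : s(a, b) ∈ chords n) :
    (graph n).Adj a b :=
  Or.inr ((fromEdgeSet_adj _).mpr ⟨h, hab⟩)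

theorem graph_adj_hub {t : ℕ} (ht : t < numChords n) :
    (graph n).Adj (Fin.ofNat n (hub n t)) (Fin.ofNat n (hub n (t + 1))) := by
  refine graph_adj_of_mem_chords (fun h => ?_)
    (mem_union_left _ (mem_image.mpr ⟨t, mem_range.mpr ht, rfl⟩))
  have := ofNat_hub_injOn (Set.mem_Iic.mpr ht.le) (Set.mem_Iic.mpr ht) h
  omega

theorem ofNat_hub_ne_zero (hn : 2 ≤ n) {j : ℕ} (hj : 1 ≤ j) : Fin.ofNat n (hub n j) ≠ 0 := by
  rw [← Fin.ofNat_zero]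
  exact fun h => (hub_pos hn hj).ne' (ofNat_injOn (hub_lt j) (NeZero.pos n) h)

theorem graph_adj_spoke (hn : 2 ≤ n) {j : ℕ} (hj : j ∈ spokeIndices n) :
    (graph n).Adj 0 (Fin.ofNat n (hub n j)) :=
  graph_adj_of_mem_chords (ofNat_hub_ne_zero hn (one_le_of_mem_spokeIndices hj)).symm
    (mem_union_right _ (mem_image.mpr ⟨j, hj, rfl⟩))

theorem graph_adj_of_chordStep (hn : 2 ≤ n) {x y : ℕ} (h : ChordStep (hub n) (numChords n) x y) :
    (graph n).Adj (Fin.ofNat n x) (Fin.ofNat n y) := by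
  obtain rfl | ⟨t, ht, rfl, rfl⟩ := h
  · exact graph_adj_succ hn x
  · exact graph_adj_hub ht

theorem exists_isCycle_of_numChords_lt {k : ℕ} (hk3 : 3 ≤ k) (hk : numChords n < k)
    (hkn : k ≤ n) : ∃ (v : Fin n) (p : (graph n).Walk v v), p.IsCycle ∧ p.length = k := by
  obtain ⟨P, ⟨hchain, hlast, hle⟩, hlen⟩ := exists_isChordPath hub_zero
    (fun _ => hub_lt_hub_succ) (fun _ => hub_succ_add_le) (le_refl (numChords n)) (s := n - k)
    (by rw [hub_numChords]; omega)
  rw [hub_numChords] at hlast hlen hle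
  have hwrap : (graph n).Adj (Fin.ofNat n (n - 1)) (Fin.ofNat n 0) := by
    simpa [Nat.sub_add_cancel (NeZero.pos n)] using graph_adj_succ (n := n) (by omega) (n - 1)
  have hsorted : (0 :: P).Pairwise (· < ·) :=
    (hchain.imp fun _ _ => ChordStep.lt fun _ => hub_lt_hub_succ).pairwise
  have hlt : ∀ x ∈ 0 :: P, x < n := by
    intro x hx
    rcases List.mem_cons.mp hx with rfl | hx
    · exact NeZero.pos n
    · have := hle x hx
      omega
  have := exists_isCycle_of_isChain (u := Fin.ofNat n (n - 1)) (l := (0 :: P).map (Fin.ofNat n))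
    (List.isChain_cons_cons.mpr ⟨hwrap,
      List.isChain_map_of_isChain (Fin.ofNat n) (fun _ _ => graph_adj_of_chordStep (by omega))
        hchain⟩)
    (by rw [List.getLast?_map, hlast]; rfl)
    (hsorted.nodup.map_on fun x hx y hy => ofNat_injOn (hlt x hx) (hlt y hy))
    (by rw [List.length_map, List.length_cons]; omega)
  simpa [show P.length + 1 = k by omega] using this

theorem exists_isCycle_of_le_numChords {k : ℕ} (hk3 : 3 ≤ k) (hk : k ≤ numChords n) :
    ∃ (v : Fin n) (p : (graph n).Walk v v), p.IsCycle ∧ p.length = k := by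
  have hn : 2 ≤ n := by have := pow_add_lt_of_lt_numChords (n := n) (i := 1) (by omega); omega
  obtain ⟨i, hi1, hi3, hmod⟩ : ∃ i, 1 ≤ i ∧ i ≤ 3 ∧ (i + k - 2) % 3 = numChords n % 3 :=
    ⟨(numChords n + 4 - k) % 3 + 1, by omega, by omega, by omega⟩
  set f : ℕ → Fin n := fun t => Fin.ofNat n (hub n t)
  -- the cycle `0, c i, c (i + 1), …, c (i + k - 2), 0`
  set L := (List.range' i (k - 1)).map f
  have hL : (0 :: L).IsChain (graph n).Adj := by
    refine List.isChain_cons.mpr ⟨?_, (List.isChain_map f).mpr ?_⟩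
    · intro y hy
      simp only [L, List.head?_map, List.head?_range', if_neg (show k - 1 ≠ 0 by omega),
        Option.map_some, Option.mem_some_iff] at hy
      exact hy ▸ graph_adj_spoke hn (mem_spokeIndices hi1 (.inl hi3))
    · refine (List.isChain_range' i (k - 1) 1).imp_of_mem_imp fun a b ha hb hab => ?_
      rw [List.mem_range'_1] at ha hb
      exact hab ▸ graph_adj_hub (by omega)
  have hclose : (0 :: L ++ [0]).IsChain (graph n).Adj := by
    refine hL.append (.singleton _) fun x hx y hy => ?_
    simp only [L, List.getLast?_cons, List.getLast?_map, List.getLast?_range',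
      if_neg (show k - 1 ≠ 0 by omega), Option.map_some, Option.getD_some, List.head?_cons,
      Option.mem_some_iff] at hx hy
    rw [← hx, ← hy, show i + (k - 1) - 1 = i + k - 2 by omega]
    exact (graph_adj_spoke hn (mem_spokeIndices (by omega) (.inr ⟨by omega, hmod⟩))).symm
  have hnodup : (L ++ [0]).Nodup := by
    refine List.nodup_append.mpr ⟨List.Nodup.map_on (fun a ha b hb => ?_) List.nodup_range',
      List.nodup_singleton _, ?_⟩
    · rw [List.mem_range'_1] at ha hb
      exact ofNat_hub_injOn (Set.mem_Iic.mpr (by omega)) (Set.mem_Iic.mpr (by omega))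
    · simp only [L, List.mem_map, List.mem_range'_1, List.mem_singleton]
      rintro _ ⟨t, ht, rfl⟩ _ rfl
      exact ofNat_hub_ne_zero hn (by omega)
  have := exists_isCycle_of_isChain (u := 0) (l := L ++ [0]) hclose (by simp) hnodup
    (by rw [List.length_append, List.length_map, List.length_range', List.length_singleton]; omega)
  simpa [L, show k - 1 + 1 = k by omega] using this

theorem card_chords_le : #(chords n) ≤ numChords n + (3 + numChords n / 3) :=
  (card_union_le _ _).trans <| add_le_add (card_image_le.trans (card_range _).le)
    (card_image_le.trans card_spokeIndices_le)

theorem ncard_edgeSet_graph_le :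
    (graph n).edgeSet.ncard ≤ n + numChords n + (3 + numChords n / 3) := by
  rw [graph, edgeSet_sup, edgeSet_fromEdgeSet, add_assoc]
  refine (Set.ncard_union_le _ _).trans (add_le_add (ncard_edgeSet_cycleGraph_le n) ?_)
  calc (↑(chords n) \ Sym2.diagSet).ncard ≤ (↑(chords n) : Set (Sym2 (Fin n))).ncard :=
        Set.ncard_le_ncard Set.sdiff_subset (chords n).finite_toSet
    _ = #(chords n) := Set.ncard_coe_finset _
    _ ≤ _ := card_chords_le

end Construction

end SparsePancyclic

open SparsePancyclic

/-- For all sufficiently large n, there exists a simple graph with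
n vertices and at most n + (3/2)·log₂ n + 1 edges that contains a cycle of
length k for every 3 ≤ k ≤ n. -/
theorem stmt_4 :
    ∃ N : ℕ, ∀ n : ℕ, N ≤ n →
      ∃ G : SimpleGraph (Fin n),
        (∀ k : ℕ, 3 ≤ k → k ≤ n →
          ∃ (v : Fin n) (c : G.Walk v v), c.IsCycle ∧ c.length = k) ∧
        (G.edgeSet.ncard : ℝ) ≤ n + 3 / 2 * Real.logb 2 n + 1 := by
  refine ⟨2 ^ 20 + 21, fun n hn => ?_⟩
  have : NeZero n := ⟨by omega⟩
  refine ⟨graph n, fun k hk3 hkn => ?_, ?_⟩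
  · rcases le_or_gt k (numChords n) with hk | hk
    exacts [exists_isCycle_of_le_numChords hk3 hk, exists_isCycle_of_numChords_lt hk3 hk hkn]
  · -- `21 ≤ M` is what makes `(4 / 3) M + 3 ≤ (3 / 2) (M - 1) + 1`.
    have hM : 21 ≤ numChords n := by
      by_contra! h
      have := le_pow_numChords_add (n := n)
      have := Nat.pow_le_pow_right two_pos (show numChords n ≤ 20 by omega)
      omega
    have hlog : ((numChords n - 1 : ℕ) : ℝ) ≤ Real.logb 2 n := by
      simpa using (Nat.cast_le.mpr numChords_sub_one_le_log).trans (Real.natLog_le_logb n 2)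
    have hedges : ((graph n).edgeSet.ncard : ℝ) ≤
        n + numChords n + (3 + (numChords n / 3 : ℕ)) := by
      exact_mod_cast ncard_edgeSet_graph_le
    have hdiv : ((numChords n / 3 : ℕ) : ℝ) ≤ numChords n / 3 := Nat.cast_div_le
    have hM' : (21 : ℝ) ≤ numChords n := by exact_mod_cast hM
    push_cast [Nat.cast_sub (show 1 ≤ numChords n by omega)] at hlog
    linarith
end
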